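/- Let (f, r) : ℝ → ℝ² be a solution of the reduced system f'' = -(M+mn) f / h(f,r)³, r'' = r₀²a²/r³ - mλ_n/r² - M r/h(f,r)³ with r > 0 everywhere, where h(f,r) = √(r² + ((M+nm)/(mn))² f²), with initial data f(0) = 0 and r'(0) = 0. If there exists T > 0 with f'(T) = 0 and r'(T) = 0, then f and r are periodic with period 4T. -/

import Mathlib

/-!
The system is Newton's equation `x'' = G x` for `x = (f, r)`, with a force `G` that is `C¹` where
`r ≠ 0` and commutes with the reflection `(f, r) ↦ (-f, r)`. For such a system, if at time `t₀`
the position is fixed by a linear symmetry `σ` of `G` and the velocity is reversed by it, then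
`t ↦ σ (x (2 t₀ - t))` is a solution with the same data at `t₀`, so by uniqueness it equals `x`.
The data at `0` give `x t = σ (x (-t))` with `σ` the reflection, the data at `T` give
`x t = x (2T - t)`, and composing the two reflections twice yields the period `4T`.
-/

open Real

noncomputable def lambdaN (n : ℕ) : ℝ :=
  (1 / 4) * ∑ k ∈ Finset.Icc 1 (n - 1), 1 / Real.sin (k * Real.pi / n)

open Set Filter Topology

section Newton

variable {E : Type*} [NormedAddCommGroup E] [NormedSpace ℝ E]

/-- The set where two solutions agree is closed, and open by local Lipschitz uniqueness. -/
theorem ODE_solution_eq_of_contDiffAt {F : E → E} {c c' : ℝ → E}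
    (hc : ∀ t, HasDerivAt c (F (c t)) t) (hc' : ∀ t, HasDerivAt c' (F (c' t)) t)
    (hF : ∀ t, ContDiffAt ℝ 1 F (c t)) {t₀ : ℝ} (h₀ : c t₀ = c' t₀) : c = c' := by
  have hcont : Continuous c := continuous_iff_continuousAt.2 fun t => (hc t).continuousAt
  have hcont' : Continuous c' := continuous_iff_continuousAt.2 fun t => (hc' t).continuousAt
  have hopen : IsOpen {t | c t = c' t} := by
    refine isOpen_iff_mem_nhds.2 fun t₁ (ht₁ : c t₁ = c' t₁) => ?_
    obtain ⟨K, s, hs, hlip⟩ := (hF t₁).exists_lipschitzOnWith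
    have hs' : s ∈ 𝓝 (c' t₁) := ht₁ ▸ hs
    exact ODE_solution_unique_of_eventually (v := fun _ => F) (s := fun _ => s)
      (Eventually.of_forall fun _ => hlip)
      (by filter_upwards [hcont.continuousAt.preimage_mem_nhds hs] with t ht using ⟨hc t, ht⟩)
      (by filter_upwards [hcont'.continuousAt.preimage_mem_nhds hs'] with t ht using ⟨hc' t, ht⟩)
      ht₁
  have huniv : {t | c t = c' t} = univ :=
    IsClopen.eq_univ ⟨isClosed_eq hcont hcont', hopen⟩ ⟨t₀, h₀⟩
  funext t
  exact (huniv ▸ mem_univ t : t ∈ {t | c t = c' t})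

theorem newton_solution_eq {G : E → E} {x x' y y' : ℝ → E}
    (hx : ∀ t, HasDerivAt x (x' t) t) (hx' : ∀ t, HasDerivAt x' (G (x t)) t)
    (hy : ∀ t, HasDerivAt y (y' t) t) (hy' : ∀ t, HasDerivAt y' (G (y t)) t)
    (hG : ∀ t, ContDiffAt ℝ 1 G (x t)) {t₀ : ℝ} (hpos : x t₀ = y t₀) (hvel : x' t₀ = y' t₀) :
    x = y := by
  have hphase := ODE_solution_eq_of_contDiffAt (F := fun p : E × E => (p.2, G p.1))
    (c := fun t => (x t, x' t)) (c' := fun t => (y t, y' t))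
    (fun t => (hx t).prodMk (hx' t)) (fun t => (hy t).prodMk (hy' t))
    (fun t => contDiffAt_snd.prodMk ((hG t).comp (x t, x' t) contDiffAt_fst)) (Prod.ext hpos hvel)
  exact funext fun t => congrArg Prod.fst (congrFun hphase t)

theorem newton_eq_reflect {G : E → E} {x x' : ℝ → E}
    (hx : ∀ t, HasDerivAt x (x' t) t) (hx' : ∀ t, HasDerivAt x' (G (x t)) t)
    (hG : ∀ t, ContDiffAt ℝ 1 G (x t)) (σ : E →L[ℝ] E) (hσG : ∀ p, G (σ p) = σ (G p))
    {t₀ : ℝ} (hpos : σ (x t₀) = x t₀) (hvel : σ (x' t₀) = -x' t₀) (t : ℝ) :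
    x t = σ (x (2 * t₀ - t)) := by
  have hrefl : ∀ t, HasDerivAt (fun t : ℝ => 2 * t₀ - t) (-1) t := fun t => by
    simpa using (hasDerivAt_id t).const_sub (2 * t₀)
  have hy : ∀ t, HasDerivAt (fun t => σ (x (2 * t₀ - t))) (-σ (x' (2 * t₀ - t))) t := fun t => by
    simpa [Function.comp_def] using σ.hasFDerivAt.comp_hasDerivAt t ((hx _).scomp t (hrefl t))
  have hy' : ∀ t, HasDerivAt (fun t => -σ (x' (2 * t₀ - t))) (G (σ (x (2 * t₀ - t)))) t :=
    fun t => by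
      simpa [Function.comp_def, Pi.neg_def, hσG] using
        (σ.hasFDerivAt.comp_hasDerivAt t ((hx' _).scomp t (hrefl t))).neg
  have h := newton_solution_eq hx hx' hy hy' hG (t₀ := t₀) (by simp [two_mul, hpos])
    (by simp [two_mul, hvel])
  exact congrFun h t

end Newton

theorem Function.Periodic.of_reflect {α : Type*} {x : ℝ → α} {σ : α → α}
    (hσ : Function.Involutive σ) {T : ℝ} (h₀ : ∀ t, x t = σ (x (-t)))
    (hT : ∀ t, x t = x (2 * T - t)) : Function.Periodic x (4 * T) := by
  intro t
  calc x (t + 4 * T) = x (-(t + 2 * T)) := by rw [hT]; ring_nf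
    _ = σ (x (t + 2 * T)) := by rw [h₀ (t + 2 * T), hσ]
    _ = σ (x (-t)) := by rw [hT (t + 2 * T)]; ring_nf
    _ = x t := (h₀ t).symm

/-- `h(f, r)` of the reduced system, with `μ = (M + nm)/(mn)`. -/
noncomputable def reducedH (μ : ℝ) (p : ℝ × ℝ) : ℝ := √(p.2 ^ 2 + μ ^ 2 * p.1 ^ 2)

noncomputable def reducedForce (A B C D μ : ℝ) (p : ℝ × ℝ) : ℝ × ℝ :=
  (-(C * p.1) / reducedH μ p ^ 3, A / p.2 ^ 3 - B / p.2 ^ 2 - D * p.2 / reducedH μ p ^ 3)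

noncomputable def negFst : (ℝ × ℝ) →L[ℝ] ℝ × ℝ :=
  (-ContinuousLinearMap.id ℝ ℝ).prodMap (ContinuousLinearMap.id ℝ ℝ)

@[simp]
theorem negFst_apply (p : ℝ × ℝ) : negFst p = (-p.1, p.2) := rfl

theorem negFst_involutive : Function.Involutive negFst := fun p => by simp

theorem reducedForce_negFst (A B C D μ : ℝ) (p : ℝ × ℝ) :
    reducedForce A B C D μ (negFst p) = negFst (reducedForce A B C D μ p) := by
  simp [reducedForce, reducedH, neg_div]

theorem contDiffAt_reducedForce (A B C D μ : ℝ) {n : WithTop ℕ∞} {p : ℝ × ℝ} (hp : p.2 ≠ 0) :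
    ContDiffAt ℝ n (reducedForce A B C D μ) p := by
  have hH : ContDiffAt ℝ n (fun q => reducedH μ q ^ 3) p := by
    have hsum : ContDiffAt ℝ n (fun q : ℝ × ℝ => q.2 ^ 2 + μ ^ 2 * q.1 ^ 2) p := by fun_prop
    exact (hsum.sqrt (by positivity)).pow 3
  have hH0 : reducedH μ p ^ 3 ≠ 0 := by unfold reducedH; positivity
  have hfst : ContDiffAt ℝ n (fun q : ℝ × ℝ => -(C * q.1)) p := by fun_prop
  have hsnd : ContDiffAt ℝ n (fun q : ℝ × ℝ => D * q.2) p := by fun_prop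
  have hinv (k : ℕ) (c : ℝ) : ContDiffAt ℝ n (fun q : ℝ × ℝ => c / q.2 ^ k) p :=
    contDiffAt_const.div (by fun_prop) (pow_ne_zero k hp)
  exact (hfst.div hH hH0).prodMk (((hinv 3 A).sub (hinv 2 B)).sub (hsnd.div hH hH0))

theorem ContDiff.hasDerivAt_deriv {f : ℝ → ℝ} (hf : ContDiff ℝ 2 f) (t : ℝ) :
    HasDerivAt (deriv f) (deriv (deriv f) t) t :=
  ((contDiff_succ_iff_deriv.mp (hf : ContDiff ℝ (1 + 1) f)).2.2.differentiable one_ne_zero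
    t).hasDerivAt

theorem odd_even_symmetry_periodic_general (M m r₀ a : ℝ) (n : ℕ) (f r : ℝ → ℝ)
    (hf : ContDiff ℝ 2 f) (hr : ContDiff ℝ 2 r) (hrpos : ∀ t, 0 < r t)
    (hfode : ∀ t, deriv (deriv f) t =
      -((M + m * n) * f t) /
        (Real.sqrt ((r t) ^ 2 + ((M + n * m) / (m * n)) ^ 2 * (f t) ^ 2)) ^ 3)
    (hrode : ∀ t, deriv (deriv r) t =
      r₀ ^ 2 * a ^ 2 / (r t) ^ 3 - m * lambdaN n / (r t) ^ 2 -
        M * r t /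
          (Real.sqrt ((r t) ^ 2 + ((M + n * m) / (m * n)) ^ 2 * (f t) ^ 2)) ^ 3)
    (hf0 : f 0 = 0) (hr'0 : deriv r 0 = 0)
    (T : ℝ) (hf'T : deriv f T = 0) (hr'T : deriv r T = 0) :
    Function.Periodic f (4 * T) ∧ Function.Periodic r (4 * T) := by
  let G := reducedForce (r₀ ^ 2 * a ^ 2) (m * lambdaN n) (M + m * n) M ((M + n * m) / (m * n))
  let x : ℝ → ℝ × ℝ := fun t => (f t, r t)
  let x' : ℝ → ℝ × ℝ := fun t => (deriv f t, deriv r t)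
  have hx : ∀ t, HasDerivAt x (x' t) t := fun t =>
    ((hf.differentiable two_ne_zero t).hasDerivAt).prodMk
      (hr.differentiable two_ne_zero t).hasDerivAt
  have hx' : ∀ t, HasDerivAt x' (G (x t)) t := fun t => by
    convert (hf.hasDerivAt_deriv t).prodMk (hr.hasDerivAt_deriv t) using 1
    exact Prod.ext (hfode t).symm (hrode t).symm
  have hG : ∀ t, ContDiffAt ℝ 1 G (x t) := fun t => contDiffAt_reducedForce _ _ _ _ _ (hrpos t).ne'
  have hodd : ∀ t, x t = negFst (x (-t)) := fun t => by
    simpa using newton_eq_reflect hx hx' hG negFst (reducedForce_negFst _ _ _ _ _) (t₀ := 0)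
      (by simp [x, hf0]) (by simp [x', hr'0]) t
  have heven : ∀ t, x t = x (2 * T - t) :=
    newton_eq_reflect hx hx' hG (ContinuousLinearMap.id ℝ _) (fun _ => rfl) rfl
      (by simp [x', hf'T, hr'T])
  have hper := Function.Periodic.of_reflect negFst_involutive hodd heven
  exact ⟨hper.comp Prod.fst, hper.comp Prod.snd⟩

theorem odd_even_symmetry_periodic (M m r₀ a : ℝ) (n : ℕ) (hM : 0 ≤ M) (hm : 0 < m)
    (hr₀ : 0 < r₀) (hn : 2 ≤ n) (f r : ℝ → ℝ)
    (hf : ContDiff ℝ 2 f) (hr : ContDiff ℝ 2 r) (hrpos : ∀ t, 0 < r t)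
    (hfode : ∀ t, deriv (deriv f) t =
      -((M + m * n) * f t) /
        (Real.sqrt ((r t) ^ 2 + ((M + n * m) / (m * n)) ^ 2 * (f t) ^ 2)) ^ 3)
    (hrode : ∀ t, deriv (deriv r) t =
      r₀ ^ 2 * a ^ 2 / (r t) ^ 3 - m * lambdaN n / (r t) ^ 2 -
        M * r t /
          (Real.sqrt ((r t) ^ 2 + ((M + n * m) / (m * n)) ^ 2 * (f t) ^ 2)) ^ 3)
    (hf0 : f 0 = 0) (hr'0 : deriv r 0 = 0)
    (T : ℝ) (hT : 0 < T) (hf'T : deriv f T = 0) (hr'T : deriv r T = 0) :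
    Function.Periodic f (4 * T) ∧ Function.Periodic r (4 * T) :=
  odd_even_symmetry_periodic_general M m r₀ a n f r hf hr hrpos hfode hrode hf0 hr'0 T hf'T hr'T
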